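/- arXiv:1608.00769 — 3 statements merged into one kernel-verified Lean document; each statement's English description precedes it below -/
import Mathlib

section
/- Let G=(V,E) be a connected graph with at least two vertices, let t ≥ 2 be an integer, let x ∈ V and let w, w' ∈ V^{t-1}. Then the distance in the generalized Sierpiński graph S(G,t) between the vertices xw and xw' equals the distance in S(G,t-1) between w and w': d_{S(G,t)}(xw, xw') = d_{S(G,t-1)}(w, w'). -/
/-!
Prepending `x` maps walks of `S(G,t)` to walks of `S(G,t+1)`, which gives `≤`. For `≥` we use a
potential: a function on the vertices of `S(G,t+1)` that changes by at most one along every edge,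
vanishes at `xw'` and equals `d(w,w')` at `xw`. An edge of `S(G,t+1)` either stays inside a copy
`a S(G,t)` or is a bridge `a b^t — b a^t` for an edge `ab` of `G`, and for both kinds the
required inequality is the triangle inequality in the connected graph `S(G,t)`.
-/

/-- The generalized Sierpiński graph `S(G,t)` of a base graph `G`: vertices are words of
length `t` over the vertex set (encoded as `Fin t → V`); two words are adjacent iff they are
of the form `w x y^{d-1}` and `w y x^{d-1}` for some edge `{x,y}` of `G`. -/
def SierpinskiGraph {V : Type*} (G : SimpleGraph V) (t : ℕ) : SimpleGraph (Fin t → V) where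
  Adj u v := ∃ i : Fin t, G.Adj (u i) (v i) ∧
      (∀ j : Fin t, j < i → u j = v j) ∧
      (∀ j : Fin t, i < j → u j = v i ∧ v j = u i)
  symm := by
    constructor
    rintro u v ⟨i, h1, h2, h3⟩
    exact ⟨i, h1.symm, fun j hj => (h2 j hj).symm, fun j hj => ⟨(h3 j hj).2, (h3 j hj).1⟩⟩
  loopless := by
    constructor
    rintro u ⟨i, h1, -, -⟩
    exact G.loopless.irrefl _ h1

namespace SimpleGraph

variable {V : Type*} {G : SimpleGraph V}

lemma Adj.dist_le_dist_add_one {u v : V} (h : G.Adj u v) (w : V) :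
    G.dist u w ≤ G.dist v w + 1 := by
  have := h.reachable.dist_triangle_left w
  rw [dist_eq_one_iff_adj.mpr h] at this
  omega

lemma Walk.le_length_add {f : V → ℕ} (hf : ∀ u v, G.Adj u v → f u ≤ f v + 1) :
    ∀ {u v : V} (p : G.Walk u v), f u ≤ p.length + f v
  | _, _, .nil => by simp
  | _, _, .cons h p => by
    have := hf _ _ h
    have := p.le_length_add hf
    rw [Walk.length_cons]
    omega

lemma Reachable.le_dist_add {f : V → ℕ} (hf : ∀ u v, G.Adj u v → f u ≤ f v + 1) {u v : V}
    (h : G.Reachable u v) : f u ≤ G.dist u v + f v := by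
  obtain ⟨p, hp⟩ := h.exists_walk_length_eq_dist
  exact hp ▸ p.le_length_add hf

end SimpleGraph

open SimpleGraph

namespace SierpinskiGraph

variable {V : Type*} {G : SimpleGraph V} {t : ℕ}

theorem adj_cons_cons_iff {a b : V} {v v' : Fin t → V} :
    (SierpinskiGraph G (t + 1)).Adj (Fin.cons a v) (Fin.cons b v') ↔
      (a = b ∧ (SierpinskiGraph G t).Adj v v') ∨
        (G.Adj a b ∧ v = (fun _ => b) ∧ v' = (fun _ => a)) := by
  constructor
  · rintro ⟨i, hadj, hlt, hgt⟩
    induction i using Fin.cases with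
    | zero =>
      refine .inr ⟨by simpa using hadj, funext fun j => ?_, funext fun j => ?_⟩
      · simpa using (hgt j.succ j.succ_pos).1
      · simpa using (hgt j.succ j.succ_pos).2
    | succ i =>
      refine .inl ⟨by simpa using hlt 0 i.succ_pos, i, by simpa using hadj, fun j hj => ?_,
        fun j hj => ?_⟩
      · simpa using hlt j.succ (Fin.succ_lt_succ_iff.mpr hj)
      · simpa using hgt j.succ (Fin.succ_lt_succ_iff.mpr hj)
  · rintro (⟨rfl, i, hadj, hlt, hgt⟩ | ⟨hadj, rfl, rfl⟩)
    · refine ⟨i.succ, by simpa using hadj, fun j hj => ?_, fun j hj => ?_⟩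
      · induction j using Fin.cases with
        | zero => rfl
        | succ j => simpa using hlt j (Fin.succ_lt_succ_iff.mp hj)
      · induction j using Fin.cases with
        | zero => exact absurd hj (Fin.succ_pos i).not_gt
        | succ j => simpa using hgt j (Fin.succ_lt_succ_iff.mp hj)
    · refine ⟨0, by simpa using hadj, fun j hj => absurd hj (Fin.not_lt_zero j),
        fun j hj => ?_⟩
      induction j using Fin.cases with
      | zero => exact absurd hj (lt_irrefl 0)
      | succ j => simp

variable (G t) in
def consHom (a : V) : SierpinskiGraph G t →g SierpinskiGraph G (t + 1) where
  toFun v := Fin.cons a v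
  map_rel' h := adj_cons_cons_iff.mpr (.inl ⟨rfl, h⟩)

theorem connected (hG : G.Connected) : ∀ t, (SierpinskiGraph G t).Connected
  | 0 => .of_subsingleton
  | t + 1 => by
    have hS := connected hG t
    have hcopies {a b : V} (p : G.Walk a b) (v v' : Fin t → V) :
        (SierpinskiGraph G (t + 1)).Reachable (Fin.cons a v) (Fin.cons b v') := by
      induction p generalizing v with
      | nil => exact (hS.preconnected v v').map (consHom G t _)
      | @cons a c b hac _ ih =>
        have hbridge := (adj_cons_cons_iff.mpr (.inr ⟨hac, rfl, rfl⟩) :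
          (SierpinskiGraph G (t + 1)).Adj (Fin.cons a fun _ => c) (Fin.cons c fun _ => a))
        exact ((hS.preconnected v _).map (consHom G t a)).trans
          (hbridge.reachable.trans (ih _))
    obtain ⟨a⟩ := hG.nonempty
    refine .mk (fun u u' => ?_) (nonempty := ⟨fun _ => a⟩)
    obtain ⟨p⟩ := hG.preconnected (u 0) (u' 0)
    simpa only [Fin.cons_self_tail] using hcopies p (Fin.tail u) (Fin.tail u')

open Classical in
variable (G) in
/-- A lower bound for the distance from `u` to `Fin.cons x g` in `S(G,t+1)`. Outside the copy
`x`, the first term is the length of a route leaving the copy `u 0` straight into the copy `x`;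
the second is its mirror image under exchanging `Fin.tail u` with `(u 0)^t`, which makes the
bound the same at both ends of a bridge `a b^t — b a^t` between two other copies. -/
noncomputable def distBound (x : V) (g : Fin t → V) (u : Fin (t + 1) → V) : ℕ :=
  if u 0 = x then (SierpinskiGraph G t).dist (Fin.tail u) g
  else min ((SierpinskiGraph G t).dist (Fin.tail u) (fun _ => x) + 1 +
      (SierpinskiGraph G t).dist (fun _ => u 0) g)
    ((SierpinskiGraph G t).dist (fun _ => u 0) (fun _ => x) + 1 +
      (SierpinskiGraph G t).dist (Fin.tail u) g)

@[simp]
theorem distBound_cons_self (x : V) (g v : Fin t → V) :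
    distBound G x g (Fin.cons x v) = (SierpinskiGraph G t).dist v g := by
  simp [distBound]

theorem distBound_cons_of_ne {x a : V} (ha : a ≠ x) (g v : Fin t → V) :
    distBound G x g (Fin.cons a v) =
      min ((SierpinskiGraph G t).dist v (fun _ => x) + 1 +
          (SierpinskiGraph G t).dist (fun _ => a) g)
        ((SierpinskiGraph G t).dist (fun _ => a) (fun _ => x) + 1 +
          (SierpinskiGraph G t).dist v g) := by
  simp [distBound, ha]

theorem distBound_le_add_one_of_adj (hG : G.Connected) {x : V} {g : Fin t → V}
    {u u' : Fin (t + 1) → V} (h : (SierpinskiGraph G (t + 1)).Adj u u') :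
    distBound G x g u ≤ distBound G x g u' + 1 := by
  have hS := connected hG t
  induction u using Fin.consCases with | cons a v =>
  induction u' using Fin.consCases with | cons b v' =>
  rcases adj_cons_cons_iff.mp h with ⟨rfl, hvv'⟩ | ⟨hab, rfl, rfl⟩
  · by_cases ha : a = x
    · subst ha
      simpa using hvv'.dist_le_dist_add_one g
    · have := hvv'.dist_le_dist_add_one g
      have := hvv'.dist_le_dist_add_one fun _ => x
      rw [distBound_cons_of_ne ha, distBound_cons_of_ne ha]
      omega
  · have := hS.dist_triangle (u := fun _ => b) (v := fun _ => x) (w := g)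
    have := hS.dist_triangle (u := fun _ => a) (v := fun _ => x) (w := g)
    by_cases ha : a = x
    · subst ha
      rw [distBound_cons_self, distBound_cons_of_ne hab.ne', SimpleGraph.dist_self]
      omega
    by_cases hb : b = x
    · subst hb
      rw [distBound_cons_self, distBound_cons_of_ne ha, SimpleGraph.dist_self]
      omega
    rw [distBound_cons_of_ne ha, distBound_cons_of_ne hb]
    omega

end SierpinskiGraph

theorem stmt_0_general {V : Type*} (G : SimpleGraph V) (hconn : G.Connected)
    (t : ℕ) (x : V) (w w' : Fin t → V) :
    (SierpinskiGraph G (t + 1)).dist (Fin.cons x w) (Fin.cons x w') =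
      (SierpinskiGraph G t).dist w w' := by
  apply le_antisymm
  · obtain ⟨p, hp⟩ := (SierpinskiGraph.connected hconn t).exists_walk_length_eq_dist w w'
    rw [← hp, ← p.length_map (SierpinskiGraph.consHom G t x)]
    exact dist_le _
  · have hreach := (SierpinskiGraph.connected hconn (t + 1)).preconnected
      (Fin.cons x w) (Fin.cons x w')
    simpa using hreach.le_dist_add fun _ _ =>
      SierpinskiGraph.distBound_le_add_one_of_adj hconn (x := x) (g := w')

/-- for a connected graph `G` with at least two vertices, `t ≥ 2` (here `t + 1`
with `t ≥ 1`), a vertex `x` and words `w, w'` of length `t`,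
`d_{S(G,t+1)}(xw, xw') = d_{S(G,t)}(w, w')`. -/
theorem stmt_0 {V : Type*} (G : SimpleGraph V) (hconn : G.Connected) (hV : Nontrivial V)
    (t : ℕ) (ht : 1 ≤ t) (x : V) (w w' : Fin t → V) :
    (SierpinskiGraph G (t + 1)).dist (Fin.cons x w) (Fin.cons x w') =
      (SierpinskiGraph G t).dist w w' :=
  stmt_0_general G hconn t x w w'
end

section
/- Let t ≥ 1 and n ≥ 2 be integers, let K_n = (V,E) be the complete graph on n vertices, let x ∈ V and let w = z_1 z_2 ⋯ z_t ∈ V^t. Then the distance in the generalized Sierpiński graph S(K_n, t) between the extreme vertex x^t and w is d_{S(K_n,t)}(x^t, w) = Σ_{i : z_i ≠ x} 2^{t-i}. -/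
open Finset

lemma Nat.sum_Ioo_two_pow_add_one {a b : ℕ} (hab : a < b) :
    ∑ m ∈ Ioo a b, 2 ^ (b - 1 - m) + 1 = 2 ^ (b - 1 - a) := by
  rw [← Finset.Ico_succ_left_eq_Ioo, Order.succ_eq_add_one, sum_Ico_reflect (2 ^ ·) _ (by omega)]
  have h1 : b - 1 + 1 - b = 0 := by omega
  have h2 : b - 1 + 1 - (a + 1) = b - 1 - a := by omega
  rw [h1, h2, ← range_eq_Ico, Nat.geomSum_eq le_rfl]
  have := Nat.one_le_two_pow (n := b - 1 - a)
  omega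

lemma Fin.sum_Ioi_two_pow_add_one {t : ℕ} (i : Fin t) :
    ∑ j ∈ Ioi i, 2 ^ (t - 1 - (j : ℕ)) + 1 = 2 ^ (t - 1 - (i : ℕ)) := by
  rw [← Nat.sum_Ioo_two_pow_add_one i.isLt, ← Fin.map_valEmbedding_Ioi, sum_map]
  rfl

lemma Fin.sum_univ_eq_sum_Iio_add_add_sum_Ioi {M : Type*} [AddCommMonoid M] {t : ℕ}
    (f : Fin t → M) (i : Fin t) :
    ∑ j, f j = ∑ j ∈ Iio i, f j + f i + ∑ j ∈ Ioi i, f j := by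
  rw [sum_Iio_add_eq_sum_Iic, ← sum_filter_add_sum_filter_not univ (· ≤ i)]
  congr 2 <;> ext <;> simp

namespace SimpleGraph

variable {α : Type*} {G : SimpleGraph α}

lemma Walk.le_add_length (f : α → ℕ) (hf : ∀ u v, G.Adj u v → f v ≤ f u + 1) {u v : α}
    (p : G.Walk u v) : f v ≤ f u + p.length := by
  induction p with
  | nil => simp
  | cons h _ ih =>
    have := hf _ _ h
    rw [Walk.length_cons]
    omega

lemma exists_walk_length_eq_of_exists_adj {x : α} (f : α → ℕ) (hx : f x = 0)
    (hf : ∀ v ≠ x, ∃ u, G.Adj u v ∧ f u + 1 = f v) (v : α) :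
    ∃ p : G.Walk x v, p.length = f v := by
  induction hfv : f v generalizing v with
  | zero =>
    by_cases hv : v = x
    · subst hv
      exact ⟨Walk.nil, rfl⟩
    · obtain ⟨u, -, hu⟩ := hf v hv
      omega
  | succ n ih =>
    have hv : v ≠ x := by
      rintro rfl
      omega
    obtain ⟨u, huv, hu⟩ := hf v hv
    obtain ⟨p, hp⟩ := ih u (by omega)
    exact ⟨p.concat huv, by rw [Walk.length_concat, hp]⟩

lemma dist_eq_of_le_add_one_of_exists_adj {x : α} (f : α → ℕ) (hx : f x = 0)
    (hle : ∀ u v, G.Adj u v → f v ≤ f u + 1)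
    (hdesc : ∀ v ≠ x, ∃ u, G.Adj u v ∧ f u + 1 = f v) (v : α) :
    G.dist x v = f v := by
  obtain ⟨p, hp⟩ := exists_walk_length_eq_of_exists_adj f hx hdesc v
  refine le_antisymm (hp ▸ dist_le p) ?_
  obtain ⟨q, hq⟩ := p.reachable.exists_walk_length_eq_dist
  have := q.le_add_length f hle
  omega

end SimpleGraph

namespace SierpinskiGraph

variable {V : Type*} [DecidableEq V] {t : ℕ}

def weight (x : V) (w : Fin t → V) : ℕ :=
  ∑ i : Fin t, if w i = x then 0 else 2 ^ (t - 1 - (i : ℕ))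

@[simp]
lemma weight_const (x : V) : weight x (fun _ : Fin t => x) = 0 := by
  simp [weight]

-- The tail `2^k - 1` is moved to the left as `+ 1`, avoiding truncated subtraction.
lemma weight_add_eq_of_forall_lt_eq (x : V) {a : V} {u : Fin t → V} {i : Fin t}
    (h : ∀ j, i < j → u j = a) :
    weight x u + (if a = x then 0 else 1) =
      ∑ j ∈ Iio i, (if u j = x then 0 else 2 ^ (t - 1 - (j : ℕ))) +
        (if u i = x then 0 else 2 ^ (t - 1 - (i : ℕ))) +
        (if a = x then 0 else 2 ^ (t - 1 - (i : ℕ))) := by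
  have htail : ∑ j ∈ Ioi i, (if u j = x then 0 else 2 ^ (t - 1 - (j : ℕ))) =
      ∑ j ∈ Ioi i, (if a = x then 0 else 2 ^ (t - 1 - (j : ℕ))) :=
    sum_congr rfl fun j hj => by rw [h j (mem_Ioi.mp hj)]
  rw [weight, Fin.sum_univ_eq_sum_Iio_add_add_sum_Ioi _ i, htail]
  have := Fin.sum_Ioi_two_pow_add_one i
  by_cases ha : a = x <;> simp only [ha, ↓reduceIte, sum_const_zero, add_zero]
  omega

lemma weight_le_weight_add_one_of_adj (G : SimpleGraph V) (x : V) {u v : Fin t → V}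
    (h : (SierpinskiGraph G t).Adj u v) : weight x v ≤ weight x u + 1 := by
  obtain ⟨i, hadj, hpre, hsuf⟩ := h
  have hu := weight_add_eq_of_forall_lt_eq x fun j hj => (hsuf j hj).1
  have hv := weight_add_eq_of_forall_lt_eq x fun j hj => (hsuf j hj).2
  have hpre : ∑ j ∈ Iio i, (if v j = x then 0 else 2 ^ (t - 1 - (j : ℕ))) =
      ∑ j ∈ Iio i, (if u j = x then 0 else 2 ^ (t - 1 - (j : ℕ))) :=
    sum_congr rfl fun j hj => by rw [hpre j (mem_Iio.mp hj)]
  have hne : u i ≠ v i := hadj.ne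
  rw [hpre] at hv
  split_ifs at hu hv <;> grind

lemma exists_adj_weight_add_one (x : V) {w : Fin t → V} (hw : w ≠ fun _ => x) :
    ∃ v, (SierpinskiGraph ⊤ t).Adj v w ∧ weight x v + 1 = weight x w := by
  obtain ⟨i, hi⟩ := ({j | w j ≠ x} : Finset (Fin t)).exists_maximal <| by
    simpa [Finset.Nonempty, funext_iff] using hw
  have hwi : w i ≠ x := by simpa using hi.prop
  have hlast : ∀ j, i < j → w j = x := fun j hij => by
    by_contra hj
    exact hij.not_ge (hi.le_of_ge (by simpa using hj) hij.le)
  let v : Fin t → V := fun j => if j < i then w j else if j = i then x else w i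
  have hvi : v i = x := by simp [v]
  have hadj : (SierpinskiGraph ⊤ t).Adj v w :=
    ⟨i, by simpa [hvi] using hwi.symm, fun j hj => by simp [v, hj],
      fun j hj => ⟨by simp [v, hj.not_gt, hj.ne'], by rw [hvi, hlast j hj]⟩⟩
  refine ⟨v, hadj, ?_⟩
  have hv := weight_add_eq_of_forall_lt_eq x (u := v) (a := w i) (i := i) fun j hj => by
    simp [v, hj.not_gt, hj.ne']
  have hw' := weight_add_eq_of_forall_lt_eq x hlast
  have hpre : ∑ j ∈ Iio i, (if v j = x then 0 else 2 ^ (t - 1 - (j : ℕ))) =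
      ∑ j ∈ Iio i, (if w j = x then 0 else 2 ^ (t - 1 - (j : ℕ))) :=
    sum_congr rfl fun j hj => by simp [v, mem_Iio.mp hj]
  simp only [hpre, hvi, hwi, if_true, if_false] at hv hw'
  omega

end SierpinskiGraph

theorem stmt_6_general (t n : ℕ) (x : Fin n) (w : Fin t → Fin n) :
    (SierpinskiGraph (⊤ : SimpleGraph (Fin n)) t).dist (fun _ => x) w =
      ∑ i : Fin t, if w i = x then 0 else 2 ^ (t - 1 - (i : ℕ)) :=
  SimpleGraph.dist_eq_of_le_add_one_of_exists_adj (SierpinskiGraph.weight x)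
    (SierpinskiGraph.weight_const x)
    (fun _ _ => SierpinskiGraph.weight_le_weight_add_one_of_adj ⊤ x)
    (fun _ => SierpinskiGraph.exists_adj_weight_add_one x) w

/-- in the Sierpiński graph of the complete graph `K_n` (`n ≥ 2`), for any vertex
`x` and word `w = z_1 z_2 ⋯ z_t` (0-indexed here, so paper index `i` corresponds to position
`i - 1` and exponent `t - i = t - 1 - (i-1)`),
`d_{S(K_n,t)}(x^t, w) = Σ_{i : z_i ≠ x} 2^{t-i}`. -/
theorem stmt_6 (t n : ℕ) (ht : 1 ≤ t) (hn : 2 ≤ n) (x : Fin n) (w : Fin t → Fin n) :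
    (SierpinskiGraph (⊤ : SimpleGraph (Fin n)) t).dist (fun _ => x) w =
      ∑ i : Fin t, if w i = x then 0 else 2 ^ (t - 1 - (i : ℕ)) :=
  stmt_6_general t n x w
end

section
/- Let u and v be two different vertices in a finite tree T. If v is an eccentric vertex for u (i.e., d_T(u,v) = ε(u)), then v is a leaf of T and ε(v) = D(T). -/
/-- Eccentricity of a vertex: the maximum distance to any other vertex. -/
noncomputable def eccent {V : Type*} (G : SimpleGraph V) (v : V) : ℕ := ⨆ u, G.dist v u

/-- Diameter: maximum eccentricity. -/
noncomputable def graphDiam {V : Type*} (G : SimpleGraph V) : ℕ := ⨆ v, eccent G v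

/-- Radius: minimum eccentricity. -/
noncomputable def graphRadius {V : Type*} (G : SimpleGraph V) : ℕ := ⨅ v, eccent G v

/-!
A neighbour of `v` that is closer to `u` lies on the path from `u` to `v`, so it is the
penultimate vertex of that path; hence `v` has at most one neighbour closer to `u`. If `v` is
eccentric for `u`, no neighbour is farther, so `v` is a leaf. The same uniqueness shows that a
path which starts moving away from `v` keeps moving away, so every path `x ⋯ y` has a vertex
`m` with `d(v, x) = d(v, m) + d(m, x)` and `d(v, y) = d(v, m) + d(m, y)`. From this one gets
the four-point condition `d(x, y) + d(u, v) ≤ max (d(u, x) + d(v, y)) (d(v, x) + d(u, y))`,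
and bounding `d(x, u), d(y, u) ≤ ε(u) = d(u, v)` and `d(x, v), d(y, v) ≤ ε(v)` gives
`d(x, y) ≤ ε(v)`.
-/

namespace SimpleGraph

variable {V : Type*} {G : SimpleGraph V} {u v w x y : V}

theorem IsAcyclic.length_eq_dist (hG : G.IsAcyclic) {p : G.Walk u v} (hp : p.IsPath) :
    p.length = G.dist u v := by
  obtain ⟨q, hq, hlen⟩ := p.reachable.exists_path_of_dist
  rw [← hlen, Subtype.mk.inj (hG.subsingleton_path u v |>.elim ⟨p, hp⟩ ⟨q, hq⟩)]

theorem IsAcyclic.dist_add_dist_of_mem_support [DecidableEq V] (hG : G.IsAcyclic)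
    {p : G.Walk x y} (hp : p.IsPath) (hw : w ∈ p.support) :
    G.dist x w + G.dist w y = G.dist x y := by
  rw [← hG.length_eq_dist (hp.takeUntil hw), ← hG.length_eq_dist (hp.dropUntil hw),
    ← hG.length_eq_dist hp, ← Walk.length_append, Walk.take_spec]

theorem IsAcyclic.dist_add_dist_of_mem_support_or [DecidableEq V] (hG : G.IsAcyclic)
    {p : G.Walk x y} (hp : p.IsPath) {m n : V} (hm : m ∈ p.support) (hn : n ∈ p.support) :
    G.dist x n + G.dist n m = G.dist x m ∨ G.dist m n + G.dist n y = G.dist m y := by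
  rw [← p.take_spec hm, Walk.mem_support_append_iff] at hn
  exact hn.imp (hG.dist_add_dist_of_mem_support (hp.takeUntil hm))
    (hG.dist_add_dist_of_mem_support (hp.dropUntil hm))

theorem IsTree.eq_penultimate_of_adj_of_dist_lt (hT : G.IsTree) {p : G.Walk u v}
    (hp : p.IsPath) (hadj : G.Adj v w) (hlt : G.dist u w < G.dist u v) : w = p.penultimate := by
  classical
  obtain ⟨q, hq, hqlen⟩ := hT.connected.exists_path_of_dist u w
  have hv : v ∉ q.support := fun hv => by
    have := dist_le (q.takeUntil v hv)
    have := q.length_takeUntil_le_length hv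
    omega
  exact hT.isAcyclic.eq_penultimate_of_adj_end hp hadj
    (hT.isAcyclic.mem_support_of_ne_mem_support_of_adj_of_isPath hp hq hadj hv)

theorem IsTree.eq_of_adj_of_dist_lt (hT : G.IsTree) {w' : V} (hw : G.Adj v w) (hw' : G.Adj v w')
    (hlt : G.dist u w < G.dist u v) (hlt' : G.dist u w' < G.dist u v) : w = w' := by
  obtain ⟨p, hp, -⟩ := hT.connected.exists_path_of_dist u v
  rw [hT.eq_penultimate_of_adj_of_dist_lt hp hw hlt, hT.eq_penultimate_of_adj_of_dist_lt hp hw' hlt']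

theorem IsTree.degree_eq_one_of_forall_dist_le [Fintype (G.neighborSet v)] (hT : G.IsTree)
    (huv : u ≠ v) (hfar : ∀ w, G.dist u w ≤ G.dist u v) : G.degree v = 1 := by
  obtain ⟨p, hp, -⟩ := hT.connected.exists_path_of_dist u v
  refine degree_eq_one_iff_existsUnique_adj.mpr
    ⟨p.penultimate, (p.adj_penultimate (Walk.not_nil_of_ne huv)).symm, fun w hw => ?_⟩
  exact hT.eq_penultimate_of_adj_of_dist_lt hp hw
    ((hfar w).lt_of_ne (hT.dist_ne_of_adj u hw).symm)

theorem IsTree.dist_eq_dist_add_length_of_isPath_cons (hT : G.IsTree) {a a' b : V}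
    (hadj : G.Adj a a') {p : G.Walk a' b} (hp : (Walk.cons hadj p).IsPath)
    (haway : G.dist v a' = G.dist v a + 1) : G.dist v b = G.dist v a' + p.length := by
  induction p generalizing a with
  | nil => simp
  | @cons a' a'' b hadj' p ih =>
    have haway' : G.dist v a'' = G.dist v a' + 1 := by
      refine (hT.dist_eq_dist_add_one_of_adj v hadj').resolve_left fun hcloser => ?_
      have : a = a'' := hT.eq_of_adj_of_dist_lt (u := v) hadj.symm hadj' (by omega) (by omega)
      subst this
      simp at hp
    rw [ih hadj' hp.of_cons haway', Walk.length_cons]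
    omega

theorem IsTree.dist_eq_dist_add_dist_of_forall_le (hT : G.IsTree) {m : V} {p : G.Walk m y}
    (hp : p.IsPath) (hmin : ∀ w ∈ p.support, G.dist v m ≤ G.dist v w) :
    G.dist v y = G.dist v m + G.dist m y := by
  cases p with
  | nil => simp
  | @cons _ m' _ hadj p =>
    have haway : G.dist v m' = G.dist v m + 1 := by
      have := hmin m' (by simp)
      have := hT.dist_ne_of_adj v hadj
      rcases hT.dist_eq_dist_add_one_of_adj v hadj with h | h <;> omega
    rw [hT.dist_eq_dist_add_length_of_isPath_cons hadj hp haway,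
      ← hT.isAcyclic.length_eq_dist hp, Walk.length_cons]
    omega

theorem IsTree.exists_mem_support_dist_eq_add (hT : G.IsTree) {p : G.Walk x y} (hp : p.IsPath)
    (v : V) : ∃ m ∈ p.support,
      G.dist v x = G.dist v m + G.dist m x ∧ G.dist v y = G.dist v m + G.dist m y := by
  classical
  obtain ⟨m, hm, hmin⟩ := p.support.toFinset.exists_min_image (G.dist v) ⟨x, by simp⟩
  rw [List.mem_toFinset] at hm
  simp only [List.mem_toFinset] at hmin
  refine ⟨m, hm, ?_, ?_⟩
  · refine hT.dist_eq_dist_add_dist_of_forall_le (hp.takeUntil hm).reverse fun w hw => hmin w ?_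
    rw [Walk.support_reverse, List.mem_reverse] at hw
    exact p.support_takeUntil_subset_support hm hw
  · exact hT.dist_eq_dist_add_dist_of_forall_le (hp.dropUntil hm) fun w hw =>
      hmin w (p.support_dropUntil_subset_support hm hw)

theorem IsTree.dist_add_dist_le_max (hT : G.IsTree) (x y u v : V) :
    G.dist x y + G.dist u v ≤ max (G.dist u x + G.dist v y) (G.dist v x + G.dist u y) := by
  classical
  obtain ⟨p, hp, -⟩ := hT.connected.exists_path_of_dist x y
  obtain ⟨m, hm, hvx, hvy⟩ := hT.exists_mem_support_dist_eq_add hp v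
  obtain ⟨n, hn, hux, huy⟩ := hT.exists_mem_support_dist_eq_add hp u
  have hxmy := hT.isAcyclic.dist_add_dist_of_mem_support hp hm
  have hxny := hT.isAcyclic.dist_add_dist_of_mem_support hp hn
  have huv : G.dist u v ≤ G.dist u n + G.dist n m + G.dist m v :=
    (hT.connected.dist_triangle).trans (by gcongr; exact hT.connected.dist_triangle)
  have horder := hT.isAcyclic.dist_add_dist_of_mem_support_or hp hm hn
  have := G.dist_comm (u := x) (v := m)
  have := G.dist_comm (u := x) (v := n)
  have := G.dist_comm (u := m) (v := n)
  have := G.dist_comm (u := m) (v := v)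
  omega

end SimpleGraph

section Eccentricity

variable {V : Type*} {G : SimpleGraph V}

theorem dist_le_eccent [Finite V] (G : SimpleGraph V) (v w : V) : G.dist v w ≤ eccent G v :=
  le_ciSup (Set.finite_range _).bddAbove w

theorem eccent_le_graphDiam [Finite V] (G : SimpleGraph V) (v : V) : eccent G v ≤ graphDiam G :=
  le_ciSup (Set.finite_range _).bddAbove v

theorem graphDiam_le [Nonempty V] {k : ℕ} (h : ∀ x y, G.dist x y ≤ k) : graphDiam G ≤ k :=
  ciSup_le fun x => ciSup_le (h x)

theorem dist_le_eccent_of_isTree_of_dist_eq_eccent [Finite V] (hT : G.IsTree) {u v : V}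
    (hecc : G.dist u v = eccent G u) (x y : V) : G.dist x y ≤ eccent G v := by
  have := hT.dist_add_dist_le_max x y u v
  have := dist_le_eccent G u x
  have := dist_le_eccent G u y
  have := dist_le_eccent G v x
  have := dist_le_eccent G v y
  omega

end Eccentricity

/-- in a finite tree `T`, if `v ≠ u` is an eccentric vertex for `u`
(i.e. `d_T(u,v) = ε(u)`), then `v` is a leaf and `ε(v) = D(T)`. -/
theorem stmt_12 {V : Type*} [Fintype V] (T : SimpleGraph V) [DecidableRel T.Adj]
    (hT : T.IsTree) (u v : V) (huv : u ≠ v)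
    (hecc : T.dist u v = eccent T u) :
    T.degree v = 1 ∧ eccent T v = graphDiam T := by
  have : Nonempty V := ⟨u⟩
  refine ⟨hT.degree_eq_one_of_forall_dist_le huv fun w => hecc ▸ dist_le_eccent T u w, ?_⟩
  exact le_antisymm (eccent_le_graphDiam T v)
    (graphDiam_le (dist_le_eccent_of_isTree_of_dist_eq_eccent hT hecc))
end
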